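/- Let κ ∈ (0,1), p ≥ 1, σ > 0, κ_c = 1 - κ. Define W(R,Y,Z,V) = (R + σV)² + (κ/(p+1))|Y|^{p+1} + (κ_c/(p+1))|Z|^{p+1} + V²/2 and K = (2σ² + 2σ + 1)·max(2σ² + 1, (p+1)/κ, (p+1)/κ_c). Then for every (R,Y,Z,V) ∈ ℝ⁴ with max(|R|,|Y|,|Z|,|V|) ≥ K, one has (2σ² + 1)|V| + 2σ|R| ≤ W(R,Y,Z,V). -/
import Mathlib


set_option maxHeartbeats 1000000 in
theorem stmt_13 (κ p σ : ℝ) (hκ0 : 0 < κ) (hκ1 : κ < 1) (hp : 1 ≤ p) (hσ : 0 < σ)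
    (W : ℝ → ℝ → ℝ → ℝ → ℝ)
    (hW : ∀ R Y Z V, W R Y Z V =
      (R + σ * V) ^ 2 + κ / (p + 1) * |Y| ^ (p + 1) +
        (1 - κ) / (p + 1) * |Z| ^ (p + 1) + V ^ 2 / 2)
    (K : ℝ)
    (hK : K = (2 * σ ^ 2 + 2 * σ + 1) *
      max (max (2 * σ ^ 2 + 1) ((p + 1) / κ)) ((p + 1) / (1 - κ))) :
    ∀ R Y Z V : ℝ, K ≤ max (max (max |R| |Y|) |Z|) |V| →
      (2 * σ ^ 2 + 1) * |V| + 2 * σ * |R| ≤ W R Y Z V := by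
  intro R Y Z V hmax
  rw [hW]
  have hκc : 0 < 1 - κ := by linarith
  have hp1 : (0:ℝ) < p + 1 := by linarith
  have hC : (0:ℝ) < 2 * σ ^ 2 + 2 * σ + 1 := by positivity
  set D := max (max (2 * σ ^ 2 + 1) ((p + 1) / κ)) ((p + 1) / (1 - κ)) with hDdef
  have hDA : 2 * σ ^ 2 + 1 ≤ D := le_trans (le_max_left _ _) (le_max_left _ _)
  have hDκ : (p + 1) / κ ≤ D := le_trans (le_max_right _ _) (le_max_left _ _)
  have hDκc : (p + 1) / (1 - κ) ≤ D := le_max_right _ _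
  have hD4 : (4:ℝ) ≤ D := by
    rcases le_total κ (1/2) with h | h
    · refine le_trans ?_ hDκ
      rw [le_div_iff₀ hκ0]; nlinarith
    · refine le_trans ?_ hDκc
      rw [le_div_iff₀ hκc]; nlinarith
  have hK4 : 4 * (2 * σ ^ 2 + 2 * σ + 1) ≤ K := by rw [hK]; nlinarith
  have hKA : (2 * σ ^ 2 + 2 * σ + 1) * (2 * σ ^ 2 + 1) ≤ K := by rw [hK]; nlinarith
  have hKκ : (2 * σ ^ 2 + 2 * σ + 1) * ((p + 1) / κ) ≤ K := by rw [hK]; nlinarith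
  have hKκc : (2 * σ ^ 2 + 2 * σ + 1) * ((p + 1) / (1 - κ)) ≤ K := by rw [hK]; nlinarith
  have hK0 : (0:ℝ) < K := lt_of_lt_of_le (by positivity) hK4
  have h1K : (1:ℝ) ≤ K := by nlinarith [hK4, sq_nonneg σ, hσ.le]
  have hYt : 0 ≤ κ / (p + 1) * |Y| ^ (p + 1) := by positivity
  have hZt : 0 ≤ (1 - κ) / (p + 1) * |Z| ^ (p + 1) := by positivity
  have hsq : 0 ≤ (R + σ * V) ^ 2 := sq_nonneg _
  have hV2 : 0 ≤ V ^ 2 / 2 := by positivity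
  rcases le_total (max (max |R| |Y|) |Z|) |V| with hcase | hcase
  · -- V is the max
    have hKV : K ≤ |V| := by rw [max_eq_right hcase] at hmax; exact hmax
    have hRV : |R| ≤ |V| := le_trans (le_trans (le_max_left _ _) (le_max_left _ _)) hcase
    have h2 : (2 * σ ^ 2 + 1) * |V| + 2 * σ * |R| ≤ V ^ 2 / 2 := by
      nlinarith [sq_abs V, abs_nonneg V, abs_nonneg R,
        mul_le_mul_of_nonneg_right hKV (abs_nonneg V),
        mul_le_mul_of_nonneg_right hK4 (abs_nonneg V),
        mul_nonneg hσ.le (abs_nonneg V), mul_nonneg (mul_nonneg hσ.le hσ.le) (abs_nonneg V)]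
    linarith
  · rw [max_eq_left hcase] at hmax
    rcases le_total (max |R| |Y|) |Z| with hcase2 | hcase2
    · -- Z is the max
      have hKZ : K ≤ |Z| := by rw [max_eq_right hcase2] at hmax; exact hmax
      have hRZ : |R| ≤ |Z| := le_trans (le_max_left _ _) hcase2
      have hVZ : |V| ≤ |Z| := le_trans hcase (by rw [max_eq_right hcase2])
      have h1Z : (1:ℝ) ≤ |Z| := h1K.trans hKZ
      have hpow : |Z| ^ (2:ℝ) ≤ |Z| ^ (p + 1) :=
        Real.rpow_le_rpow_of_exponent_le h1Z (by linarith)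
      have hpow2 : |Z| ^ (2:ℝ) = |Z| ^ (2:ℕ) := by
        rw [← Real.rpow_natCast |Z| 2]; norm_num
      have h6 : (2 * σ ^ 2 + 2 * σ + 1) * (p + 1) / (1 - κ) ≤ K := by
        rw [mul_div_assoc]; exact hKκc
      have h5 : (2 * σ ^ 2 + 2 * σ + 1) * (p + 1) ≤ K * (1 - κ) := (div_le_iff₀ hκc).mp h6
      have h7 : (2 * σ ^ 2 + 2 * σ + 1) ≤ (1 - κ) / (p + 1) * K := by
        rw [div_mul_eq_mul_div, le_div_iff₀ hp1]; linarith [h5]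
      have h8 : (2 * σ ^ 2 + 2 * σ + 1) * |Z| ≤ (1 - κ) / (p + 1) * K * |Z| :=
        mul_le_mul_of_nonneg_right h7 (abs_nonneg Z)
      have h9 : (1 - κ) / (p + 1) * K * |Z| ≤ (1 - κ) / (p + 1) * (|Z| * |Z|) := by
        rw [mul_assoc]
        exact mul_le_mul_of_nonneg_left (mul_le_mul_of_nonneg_right hKZ (abs_nonneg Z))
          (by positivity)
      have h10 : (1 - κ) / (p + 1) * (|Z| * |Z|) ≤ (1 - κ) / (p + 1) * |Z| ^ (p + 1) := by
        have h11 : |Z| * |Z| ≤ |Z| ^ (p + 1) := by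
          calc |Z| * |Z| = |Z| ^ (2:ℕ) := by ring
          _ = |Z| ^ (2:ℝ) := hpow2.symm
          _ ≤ |Z| ^ (p + 1) := hpow
        exact mul_le_mul_of_nonneg_left h11 (by positivity)
      have hLHS : (2 * σ ^ 2 + 1) * |V| + 2 * σ * |R| ≤ (2 * σ ^ 2 + 2 * σ + 1) * |Z| := by
        have t1 := mul_le_mul_of_nonneg_left hVZ (show (0:ℝ) ≤ 2 * σ ^ 2 + 1 by positivity)
        have t2 := mul_le_mul_of_nonneg_left hRZ (show (0:ℝ) ≤ 2 * σ by positivity)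
        linarith
      linarith
    · rw [max_eq_left hcase2] at hmax
      have hVm : |V| ≤ max |R| |Y| := le_trans hcase (by rw [max_eq_left hcase2])
      rcases le_total |R| |Y| with hcase3 | hcase3
      · -- Y is the max
        have hKY : K ≤ |Y| := by rw [max_eq_right hcase3] at hmax; exact hmax
        have hVY : |V| ≤ |Y| := le_trans hVm (by rw [max_eq_right hcase3])
        have h1Y : (1:ℝ) ≤ |Y| := h1K.trans hKY
        have hpow : |Y| ^ (2:ℝ) ≤ |Y| ^ (p + 1) :=
          Real.rpow_le_rpow_of_exponent_le h1Y (by linarith)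
        have hpow2 : |Y| ^ (2:ℝ) = |Y| ^ (2:ℕ) := by
          rw [← Real.rpow_natCast |Y| 2]; norm_num
        have h6 : (2 * σ ^ 2 + 2 * σ + 1) * (p + 1) / κ ≤ K := by
          rw [mul_div_assoc]; exact hKκ
        have h5 : (2 * σ ^ 2 + 2 * σ + 1) * (p + 1) ≤ K * κ := (div_le_iff₀ hκ0).mp h6
        have h7 : (2 * σ ^ 2 + 2 * σ + 1) ≤ κ / (p + 1) * K := by
          rw [div_mul_eq_mul_div, le_div_iff₀ hp1]; linarith [h5]
        have h8 : (2 * σ ^ 2 + 2 * σ + 1) * |Y| ≤ κ / (p + 1) * K * |Y| :=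
          mul_le_mul_of_nonneg_right h7 (abs_nonneg Y)
        have h9 : κ / (p + 1) * K * |Y| ≤ κ / (p + 1) * (|Y| * |Y|) := by
          rw [mul_assoc]
          exact mul_le_mul_of_nonneg_left (mul_le_mul_of_nonneg_right hKY (abs_nonneg Y))
            (by positivity)
        have h10 : κ / (p + 1) * (|Y| * |Y|) ≤ κ / (p + 1) * |Y| ^ (p + 1) := by
          have h11 : |Y| * |Y| ≤ |Y| ^ (p + 1) := by
            calc |Y| * |Y| = |Y| ^ (2:ℕ) := by ring
            _ = |Y| ^ (2:ℝ) := hpow2.symm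
            _ ≤ |Y| ^ (p + 1) := hpow
          exact mul_le_mul_of_nonneg_left h11 (by positivity)
        have hRY : |R| ≤ |Y| := hcase3
        have hLHS : (2 * σ ^ 2 + 1) * |V| + 2 * σ * |R| ≤ (2 * σ ^ 2 + 2 * σ + 1) * |Y| := by
          have t1 := mul_le_mul_of_nonneg_left hVY (show (0:ℝ) ≤ 2 * σ ^ 2 + 1 by positivity)
          have t2 := mul_le_mul_of_nonneg_left hRY (show (0:ℝ) ≤ 2 * σ by positivity)
          linarith
        linarith
      · -- R is the max
        have hKR : K ≤ |R| := by rw [max_eq_left hcase3] at hmax; exact hmax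
        have hA : (0:ℝ) < 2 * σ ^ 2 + 1 := by positivity
        have hKA' : (4 * σ + 1) * (2 * σ ^ 2 + 1) ≤ K := by
          rcases le_total σ 1 with h | h
          · nlinarith [hK4]
          · nlinarith [hKA]
        have x4 : (4 * σ + 1) * (2 * σ ^ 2 + 1) ≤ |R| := hKA'.trans hKR
        have key2 : 0 ≤ 2 * |R| ^ 2 - 8 * σ * (2 * σ ^ 2 + 1) * |R| - (2 * σ ^ 2 + 1) ^ 2 := by
          nlinarith [mul_nonneg (sub_nonneg.2 x4) (abs_nonneg R), x4, hA, hσ, abs_nonneg R]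
        have hRV' : 0 ≤ R * V + |R| * |V| := by
          have h1 := neg_abs_le (R * V)
          rw [abs_mul] at h1
          linarith
        have h11 : 0 ≤ 4 * σ * (2 * σ ^ 2 + 1) * (R * V + |R| * |V|) :=
          mul_nonneg (by positivity) hRV'
        have key3 : (2 * σ ^ 2 + 1) * |V| + 2 * σ * |R| ≤ (R + σ * V) ^ 2 + V ^ 2 / 2 := by
          nlinarith [sq_nonneg ((2 * σ ^ 2 + 1) * |V| - 2 * σ * |R| - (2 * σ ^ 2 + 1)),
            key2, h11, sq_abs R, sq_abs V, hA]
        linarith
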